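/- (Theorem 1, reduced null-coordinate form.) Let d ≥ 2 be an integer, L > 0, k a real constant, U ⊆ ℝ² open, and f, r : U → ℝ twice continuously differentiable with r > 0 on U. Suppose T₊₊, T₋₋, T₊₋ : U → ℝ satisfy the reduced Einstein equations: r·T±±/(d−1) = −(∂±f)(∂±r) − ∂±∂±r and r·T₊₋/(d−1) = ∂₊∂₋r + ((d−2)/r)[ (e^{−f}/2)(k + r²/L²) + (∂₊r)(∂₋r) ] + (r/L²)e^{−f}, with T₊₊ ≥ 0, T₋₋ ≥ 0, T₊₋ ≥ 0 on U. Define μ = k r^{d−2} + 2 e^{f} r^{d−2} (∂₊r)(∂₋r) + r^{d}/L². Let γ = (γ⁺, γ⁻) : [0,1] → U be continuously differentiable with (γ⁺)′ ≥ 0 and (γ⁻)′ ≤ 0, with ∂₊r ≥ 0 and ∂₋r ≤ 0 along γ, and with ∂₊r(γ(0)) = 0. Fix any Ω > 0, set r₀ = r(γ(0)), define the horizon area A = Ω·r₀^{d−1} and the mass parameter M by 16πG_N M = (d−1)·Ω·μ(γ(1)) (for any fixed G_N > 0). Then 16πG_N M/((d−1)Ω) ≥ k·(A/Ω)^{(d−2)/(d−1)}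 + (1/L²)·(A/Ω)^{d/(d−1)}. -/

import Mathlib

/-- Partial derivative in the `x⁺` (first coordinate) direction. -/
noncomputable def dplus (g : ℝ × ℝ → ℝ) (x : ℝ × ℝ) : ℝ := fderiv ℝ g x (1, 0)

/-- Partial derivative in the `x⁻` (second coordinate) direction. -/
noncomputable def dminus (g : ℝ × ℝ → ℝ) (x : ℝ × ℝ) : ℝ := fderiv ℝ g x (0, 1)

/-!
Along the curve the Misner–Sharp mass `μ` is nondecreasing. Differentiating `μ` and eliminating the
second derivatives of `r` by the reduced Einstein equations gives
`∂±μ = 2 e^f r^(d-1) / (d-1) · (∂±r · T₊₋ - ∂∓r · T±±)`, and the signs of `γ'`, of `∂±r` and of the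
`T`'s make the derivative of `μ ∘ γ` nonnegative. At the marginally trapped end `∂₊r = 0`, so
`μ(γ 0) = k r₀^(d-2) + r₀^d / L²`, and `μ(γ 1) ≥ μ(γ 0)` is the claim since `(A/Ω)^(1/(d-1)) = r₀`.
-/

open Real

lemma ContinuousLinearMap.apply_eq_fst_mul_add_snd_mul (D : ℝ × ℝ →L[ℝ] ℝ) (v : ℝ × ℝ) :
    D v = v.1 * D (1, 0) + v.2 * D (0, 1) := by
  have hv : v = v.1 • ((1 : ℝ), (0 : ℝ)) + v.2 • ((0 : ℝ), (1 : ℝ)) := by ext <;> simp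
  conv_lhs => rw [hv]
  simp only [map_add, map_smul, smul_eq_mul]

lemma DifferentiableAt.comp_hasDerivWithinAt_dplus_dminus {g : ℝ × ℝ → ℝ} {c : ℝ → ℝ × ℝ}
    {a b : ℝ} {s : Set ℝ} {t : ℝ} (hg : DifferentiableAt ℝ g (c t))
    (hc : HasDerivWithinAt c (a, b) s t) :
    HasDerivWithinAt (g ∘ c) (a * dplus g (c t) + b * dminus g (c t)) s t := by
  have h := hg.hasFDerivAt.comp_hasDerivWithinAt t hc
  rwa [ContinuousLinearMap.apply_eq_fst_mul_add_snd_mul] at h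

section SecondDerivatives

variable {r : ℝ × ℝ → ℝ} {x : ℝ × ℝ}

lemma fderiv_fderiv_apply_const (hr : DifferentiableAt ℝ (fderiv ℝ r) x) (v w : ℝ × ℝ) :
    fderiv ℝ (fun y => fderiv ℝ r y v) x w = fderiv ℝ (fderiv ℝ r) x w v := by
  rw [fderiv_clm_apply hr (differentiableAt_const v)]
  simp

lemma ContDiffAt.differentiableAt_fderiv (hr : ContDiffAt ℝ 2 r x) :
    DifferentiableAt ℝ (fderiv ℝ r) x :=
  (hr.fderiv_right le_rfl).differentiableAt one_ne_zero

lemma ContDiffAt.differentiableAt_dplus (hr : ContDiffAt ℝ 2 r x) :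
    DifferentiableAt ℝ (dplus r) x :=
  hr.differentiableAt_fderiv.clm_apply (differentiableAt_const _)

lemma ContDiffAt.differentiableAt_dminus (hr : ContDiffAt ℝ 2 r x) :
    DifferentiableAt ℝ (dminus r) x :=
  hr.differentiableAt_fderiv.clm_apply (differentiableAt_const _)

lemma ContDiffAt.dminus_dplus (hr : ContDiffAt ℝ 2 r x) :
    dminus (dplus r) x = dplus (dminus r) x := by
  change fderiv ℝ (fun y => fderiv ℝ r y (1, 0)) x (0, 1) =
    fderiv ℝ (fun y => fderiv ℝ r y (0, 1)) x (1, 0)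
  rw [fderiv_fderiv_apply_const hr.differentiableAt_fderiv,
    fderiv_fderiv_apply_const hr.differentiableAt_fderiv]
  exact hr.isSymmSndFDerivAt (by simp [minSmoothness_of_isRCLikeNormedField]) _ _

end SecondDerivatives

noncomputable def misnerSharpMass (d : ℕ) (L k : ℝ) (f r : ℝ × ℝ → ℝ) (x : ℝ × ℝ) : ℝ :=
  k * r x ^ (d - 2) + 2 * exp (f x) * r x ^ (d - 2) * dplus r x * dminus r x + r x ^ d / L ^ 2

structure IsReducedEinsteinAt (d : ℕ) (L k : ℝ) (f r : ℝ × ℝ → ℝ) (Tpp Tmm Tpm : ℝ)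
    (x : ℝ × ℝ) : Prop where
  plus_plus : r x * Tpp / ((d : ℝ) - 1) = -(dplus f x) * dplus r x - dplus (dplus r) x
  minus_minus : r x * Tmm / ((d : ℝ) - 1) = -(dminus f x) * dminus r x - dminus (dminus r) x
  plus_minus : r x * Tpm / ((d : ℝ) - 1) =
    dplus (dminus r) x + (((d : ℝ) - 2) / r x) *
      (exp (-(f x)) / 2 * (k + r x ^ 2 / L ^ 2) + dplus r x * dminus r x)
    + (r x / L ^ 2) * exp (-(f x))

lemma natCast_mul_pow_sub_one (n : ℕ) {R : ℝ} (hR : R ≠ 0) :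
    (n : ℝ) * R ^ (n - 1) = n * R ^ n / R := by
  cases n with
  | zero => simp
  | succ i => rw [pow_succ, Nat.add_sub_cancel, mul_div_assoc, mul_div_cancel_right₀ _ hR]

theorem hasDerivWithinAt_misnerSharpMass_comp {d : ℕ} (hd : 2 ≤ d) {L k Tpp Tmm Tpm : ℝ}
    {f r : ℝ × ℝ → ℝ} {c : ℝ → ℝ × ℝ} {a b : ℝ} {s : Set ℝ} {t : ℝ}
    (hf : DifferentiableAt ℝ f (c t)) (hr : ContDiffAt ℝ 2 r (c t)) (hr₀ : r (c t) ≠ 0)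
    (hE : IsReducedEinsteinAt d L k f r Tpp Tmm Tpm (c t)) (hc : HasDerivWithinAt c (a, b) s t) :
    HasDerivWithinAt (misnerSharpMass d L k f r ∘ c)
      (2 * exp (f (c t)) * r (c t) ^ (d - 1) / ((d : ℝ) - 1) *
        (a * (dplus r (c t) * Tpm - dminus r (c t) * Tpp)
          + b * (dminus r (c t) * Tpm - dplus r (c t) * Tmm))) s t := by
  obtain ⟨n, rfl⟩ : ∃ n, d = n + 2 := ⟨d - 2, by omega⟩
  have hR := (hr.differentiableAt two_ne_zero).comp_hasDerivWithinAt_dplus_dminus hc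
  have hF := hf.comp_hasDerivWithinAt_dplus_dminus hc
  have hP := hr.differentiableAt_dplus.comp_hasDerivWithinAt_dplus_dminus hc
  have hM := hr.differentiableAt_dminus.comp_hasDerivWithinAt_dplus_dminus hc
  have hμ := (((hR.pow n).const_mul k).add
    ((((hF.exp.const_mul 2).mul (hR.pow n)).mul hP).mul hM)).add
    ((hR.pow (n + 2)).div_const (L ^ 2))
  refine hμ.congr_deriv ?_
  obtain ⟨hpp, hmm, hpm⟩ := hE
  rw [hr.dminus_dplus] at hP ⊢
  have hd1 : ((n + 2 : ℕ) : ℝ) - 1 = n + 1 := by push_cast; ring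
  have hd2 : ((n + 2 : ℕ) : ℝ) - 2 = n := by push_cast; ring
  rw [hd1] at hpp hmm hpm ⊢
  rw [hd2] at hpm
  simp only [Function.comp, natCast_mul_pow_sub_one _ hr₀]
  have hn : (n : ℝ) + 1 ≠ 0 := by positivity
  have hpp' : dplus (dplus r) (c t) = -dplus f (c t) * dplus r (c t) - r (c t) * Tpp / (n + 1) := by
    linarith
  have hmm' : dminus (dminus r) (c t) =
      -dminus f (c t) * dminus r (c t) - r (c t) * Tmm / (n + 1) := by
    linarith
  have hpm' : dplus (dminus r) (c t) = r (c t) * Tpm / (n + 1) - (n / r (c t)) *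
      (exp (-f (c t)) / 2 * (k + r (c t) ^ 2 / L ^ 2) + dplus r (c t) * dminus r (c t))
      - r (c t) / L ^ 2 * exp (-f (c t)) := by
    linarith
  -- After substitution only the `T` terms survive: the `∂f`, `k`, `1/L²` and `n (∂₊r) (∂₋r)`
  -- contributions cancel.
  simp only [Pi.mul_apply, Pi.pow_apply, Function.comp, hpp', hmm', hpm', exp_neg]
  field_simp
  push_cast
  ring

lemma flux_nonneg_of_signs {a b p m Tpp Tmm Tpm : ℝ} (ha : 0 ≤ a) (hb : b ≤ 0) (hp : 0 ≤ p)
    (hm : m ≤ 0) (hTpp : 0 ≤ Tpp) (hTmm : 0 ≤ Tmm) (hTpm : 0 ≤ Tpm) :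
    0 ≤ a * (p * Tpm - m * Tpp) + b * (m * Tpm - p * Tmm) := by
  have hplus : 0 ≤ p * Tpm - m * Tpp := by nlinarith [mul_nonneg hp hTpm]
  have hminus : m * Tpm - p * Tmm ≤ 0 := by nlinarith [mul_nonneg hp hTmm]
  nlinarith [mul_nonneg ha hplus, mul_nonneg_of_nonpos_of_nonpos hb hminus]

lemma DifferentiableWithinAt.hasDerivWithinAt_prodMk {γp γm : ℝ → ℝ} {s : Set ℝ} {t : ℝ}
    (h : DifferentiableWithinAt ℝ (fun t => (γp t, γm t)) s t) :
    HasDerivWithinAt (fun t => (γp t, γm t)) (derivWithin γp s t, derivWithin γm s t) s t :=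
  h.fst.hasDerivWithinAt.prodMk h.snd.hasDerivWithinAt

theorem monotoneOn_misnerSharpMass_comp {d : ℕ} (hd : 2 ≤ d) {L k : ℝ} {U : Set (ℝ × ℝ)}
    (hU : IsOpen U) {f r : ℝ × ℝ → ℝ} (hf : ContDiffOn ℝ 2 f U) (hr : ContDiffOn ℝ 2 r U)
    (hrpos : ∀ x ∈ U, 0 < r x) {Tpp Tmm Tpm : ℝ × ℝ → ℝ}
    (hE : ∀ x ∈ U, IsReducedEinsteinAt d L k f r (Tpp x) (Tmm x) (Tpm x) x)
    (hTpp : ∀ x ∈ U, 0 ≤ Tpp x) (hTmm : ∀ x ∈ U, 0 ≤ Tmm x) (hTpm : ∀ x ∈ U, 0 ≤ Tpm x)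
    {γp γm : ℝ → ℝ} {s : Set ℝ} (hs : Convex ℝ s) (hγU : ∀ t ∈ s, (γp t, γm t) ∈ U)
    (hγ : DifferentiableOn ℝ (fun t => (γp t, γm t)) s)
    (hγp' : ∀ t ∈ s, 0 ≤ derivWithin γp s t) (hγm' : ∀ t ∈ s, derivWithin γm s t ≤ 0)
    (huntrapped : ∀ t ∈ s, 0 ≤ dplus r (γp t, γm t) ∧ dminus r (γp t, γm t) ≤ 0) :
    MonotoneOn (fun t => misnerSharpMass d L k f r (γp t, γm t)) s := by
  have hderiv := fun t (ht : t ∈ s) =>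
    have hx : U ∈ nhds (γp t, γm t) := hU.mem_nhds (hγU t ht)
    hasDerivWithinAt_misnerSharpMass_comp (c := fun t => (γp t, γm t)) hd
      ((hf.contDiffAt hx).differentiableAt two_ne_zero) (hr.contDiffAt hx)
      (hrpos _ (hγU t ht)).ne' (hE _ (hγU t ht)) (hγ t ht).hasDerivWithinAt_prodMk
  refine monotoneOn_of_hasDerivWithinAt_nonneg hs (fun t ht => (hderiv t ht).continuousWithinAt)
    (fun t ht => (hderiv t (interior_subset ht)).mono interior_subset) fun t ht => ?_
  have ht := interior_subset ht
  have hx := hγU t ht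
  have hd1 : (0 : ℝ) < (d : ℝ) - 1 := by
    have : (2 : ℝ) ≤ d := by exact_mod_cast hd
    linarith
  have hr_pos := hrpos _ hx
  exact mul_nonneg (by positivity) (flux_nonneg_of_signs (hγp' t ht) (hγm' t ht)
    (huntrapped t ht).1 (huntrapped t ht).2 (hTpp _ hx) (hTmm _ hx) (hTpm _ hx))

lemma Real.pow_rpow_natCast_div {ρ : ℝ} (hρ : 0 ≤ ρ) {m : ℕ} (hm : m ≠ 0) (j : ℕ) :
    (ρ ^ m) ^ ((j : ℝ) / m) = ρ ^ j := by
  rw [← Real.rpow_natCast_mul hρ, mul_div_cancel₀ _ (Nat.cast_ne_zero.2 hm), Real.rpow_natCast]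

theorem penrose_inequality_reduced_general
    (d : ℕ) (hd : 2 ≤ d) (L k : ℝ)
    (U : Set (ℝ × ℝ)) (hU : IsOpen U)
    (f r : ℝ × ℝ → ℝ)
    (hf : ContDiffOn ℝ 2 f U) (hr : ContDiffOn ℝ 2 r U)
    (hrpos : ∀ x ∈ U, 0 < r x)
    (Tpp Tmm Tpm : ℝ × ℝ → ℝ)
    (hEpp : ∀ x ∈ U, r x * Tpp x / ((d : ℝ) - 1) =
      -(dplus f x) * dplus r x - dplus (dplus r) x)
    (hEmm : ∀ x ∈ U, r x * Tmm x / ((d : ℝ) - 1) =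
      -(dminus f x) * dminus r x - dminus (dminus r) x)
    (hEpm : ∀ x ∈ U, r x * Tpm x / ((d : ℝ) - 1) =
      dplus (dminus r) x + (((d : ℝ) - 2) / r x) *
        (Real.exp (-(f x)) / 2 * (k + r x ^ 2 / L ^ 2) + dplus r x * dminus r x)
      + (r x / L ^ 2) * Real.exp (-(f x)))
    (hTppnn : ∀ x ∈ U, 0 ≤ Tpp x) (hTmmnn : ∀ x ∈ U, 0 ≤ Tmm x)
    (hTpmnn : ∀ x ∈ U, 0 ≤ Tpm x)
    (μ : ℝ × ℝ → ℝ)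
    (hμ : ∀ x, μ x = k * r x ^ (d - 2)
      + 2 * Real.exp (f x) * r x ^ (d - 2) * dplus r x * dminus r x
      + r x ^ d / L ^ 2)
    (γp γm : ℝ → ℝ)
    (hγmem : ∀ t ∈ Set.Icc (0 : ℝ) 1, (γp t, γm t) ∈ U)
    (hγC1 : ContDiffOn ℝ 1 (fun t => (γp t, γm t)) (Set.Icc (0 : ℝ) 1))
    (hγp' : ∀ t ∈ Set.Icc (0 : ℝ) 1, 0 ≤ derivWithin γp (Set.Icc (0 : ℝ) 1) t)
    (hγm' : ∀ t ∈ Set.Icc (0 : ℝ) 1, derivWithin γm (Set.Icc (0 : ℝ) 1) t ≤ 0)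
    (huntrapped : ∀ t ∈ Set.Icc (0 : ℝ) 1,
      0 ≤ dplus r (γp t, γm t) ∧ dminus r (γp t, γm t) ≤ 0)
    (hmarg : dplus r (γp 0, γm 0) = 0)
    (Ω GN A M : ℝ) (hΩ : 0 < Ω)
    (hA : A = Ω * r (γp 0, γm 0) ^ (d - 1))
    (hM : 16 * Real.pi * GN * M = ((d : ℝ) - 1) * Ω * μ (γp 1, γm 1)) :
    16 * Real.pi * GN * M / (((d : ℝ) - 1) * Ω) ≥
      k * (A / Ω) ^ (((d : ℝ) - 2) / ((d : ℝ) - 1))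
      + (1 / L ^ 2) * (A / Ω) ^ ((d : ℝ) / ((d : ℝ) - 1)) := by
  obtain rfl : μ = misnerSharpMass d L k f r := funext hμ
  have hmono := monotoneOn_misnerSharpMass_comp hd hU hf hr hrpos
    (fun x hx => ⟨hEpp x hx, hEmm x hx, hEpm x hx⟩) hTppnn hTmmnn hTpmnn (convex_Icc 0 1) hγmem
    (hγC1.differentiableOn one_ne_zero) hγp' hγm' huntrapped
  have hμ₀₁ : misnerSharpMass d L k f r (γp 0, γm 0) ≤ misnerSharpMass d L k f r (γp 1, γm 1) :=
    hmono (Set.left_mem_Icc.2 zero_le_one) (Set.right_mem_Icc.2 zero_le_one) zero_le_one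
  set r₀ := r (γp 0, γm 0)
  have hr₀ : 0 ≤ r₀ := (hrpos _ (hγmem 0 (Set.left_mem_Icc.2 zero_le_one))).le
  have hμ₀ : misnerSharpMass d L k f r (γp 0, γm 0) = k * r₀ ^ (d - 2) + r₀ ^ d / L ^ 2 := by
    simp [misnerSharpMass, hmarg, r₀]
  have hd1 : ((d - 1 : ℕ) : ℝ) = (d : ℝ) - 1 := by rw [Nat.cast_sub (by omega)]; norm_num
  have hd2 : ((d - 2 : ℕ) : ℝ) = (d : ℝ) - 2 := by rw [Nat.cast_sub hd]; norm_num
  have hLHS : 16 * Real.pi * GN * M / (((d : ℝ) - 1) * Ω) =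
      misnerSharpMass d L k f r (γp 1, γm 1) := by
    have hd1_pos : (0 : ℝ) < (d : ℝ) - 1 := by rw [← hd1]; exact_mod_cast (by omega : 0 < d - 1)
    rw [hM, mul_div_cancel_left₀ _ (mul_pos hd1_pos hΩ).ne']
  have hAΩ : A / Ω = r₀ ^ (d - 1) := by rw [hA, mul_div_cancel_left₀ _ hΩ.ne']
  rw [ge_iff_le, hLHS, hAΩ, ← hd1, ← hd2, Real.pow_rpow_natCast_div hr₀ (by omega),
    Real.pow_rpow_natCast_div hr₀ (by omega), one_div, inv_mul_eq_div]
  linarith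

theorem penrose_inequality_reduced
    (d : ℕ) (hd : 2 ≤ d) (L k : ℝ) (hL : 0 < L)
    (U : Set (ℝ × ℝ)) (hU : IsOpen U)
    (f r : ℝ × ℝ → ℝ)
    (hf : ContDiffOn ℝ 2 f U) (hr : ContDiffOn ℝ 2 r U)
    (hrpos : ∀ x ∈ U, 0 < r x)
    (Tpp Tmm Tpm : ℝ × ℝ → ℝ)
    (hEpp : ∀ x ∈ U, r x * Tpp x / ((d : ℝ) - 1) =
      -(dplus f x) * dplus r x - dplus (dplus r) x)
    (hEmm : ∀ x ∈ U, r x * Tmm x / ((d : ℝ) - 1) =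
      -(dminus f x) * dminus r x - dminus (dminus r) x)
    (hEpm : ∀ x ∈ U, r x * Tpm x / ((d : ℝ) - 1) =
      dplus (dminus r) x + (((d : ℝ) - 2) / r x) *
        (Real.exp (-(f x)) / 2 * (k + r x ^ 2 / L ^ 2) + dplus r x * dminus r x)
      + (r x / L ^ 2) * Real.exp (-(f x)))
    (hTppnn : ∀ x ∈ U, 0 ≤ Tpp x) (hTmmnn : ∀ x ∈ U, 0 ≤ Tmm x)
    (hTpmnn : ∀ x ∈ U, 0 ≤ Tpm x)
    (μ : ℝ × ℝ → ℝ)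
    (hμ : ∀ x, μ x = k * r x ^ (d - 2)
      + 2 * Real.exp (f x) * r x ^ (d - 2) * dplus r x * dminus r x
      + r x ^ d / L ^ 2)
    (γp γm : ℝ → ℝ)
    (hγmem : ∀ t ∈ Set.Icc (0 : ℝ) 1, (γp t, γm t) ∈ U)
    (hγC1 : ContDiffOn ℝ 1 (fun t => (γp t, γm t)) (Set.Icc (0 : ℝ) 1))
    (hγp' : ∀ t ∈ Set.Icc (0 : ℝ) 1, 0 ≤ derivWithin γp (Set.Icc (0 : ℝ) 1) t)
    (hγm' : ∀ t ∈ Set.Icc (0 : ℝ) 1, derivWithin γm (Set.Icc (0 : ℝ) 1) t ≤ 0)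
    (huntrapped : ∀ t ∈ Set.Icc (0 : ℝ) 1,
      0 ≤ dplus r (γp t, γm t) ∧ dminus r (γp t, γm t) ≤ 0)
    (hmarg : dplus r (γp 0, γm 0) = 0)
    (Ω GN A M : ℝ) (hΩ : 0 < Ω) (hGN : 0 < GN)
    (hA : A = Ω * r (γp 0, γm 0) ^ (d - 1))
    (hM : 16 * Real.pi * GN * M = ((d : ℝ) - 1) * Ω * μ (γp 1, γm 1)) :
    16 * Real.pi * GN * M / (((d : ℝ) - 1) * Ω) ≥
      k * (A / Ω) ^ (((d : ℝ) - 2) / ((d : ℝ) - 1))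
      + (1 / L ^ 2) * (A / Ω) ^ ((d : ℝ) / ((d : ℝ) - 1)) :=
  penrose_inequality_reduced_general d hd L k U hU f r hf hr hrpos Tpp Tmm Tpm hEpp hEmm hEpm hTppnn
    hTmmnn hTpmnn μ hμ γp γm hγmem hγC1 hγp' hγm' huntrapped hmarg Ω GN A M hΩ hA hM
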